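/- For all integers n ≥ 2, ∑_{i=1}^{n−1} ( 2(n−i)/((n−1)·i·(i+1)) )² = 4·( (2n⁴ + 2n³ + n²)·H_{n−1,2} − 3n⁴ − 2n³ + 2n² + 2n + 1 ) / (n²(n−1)²), and this quantity converges, as n → ∞, to 4π²/3 − 12. -/

import Mathlib

/-!
Writing `H = ∑_{k ≤ N} 1/k²` and `t = 1/(N+1)`, the partial fractions
`1/(i²(i+1)²) = 1/i² + 1/(i+1)² - 2/i + 2/(i+1)` and `1/(i(i+1)²) = 1/i - 1/(i+1) - 1/(i+1)²`
make every sum `∑ (x - i)²/(i²(i+1)²)` telescope to a polynomial in `x`, `H` and `t`; with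
`x = n` and `N = n - 1` this is the closed form. Dividing numerator and denominator by `n⁴`
exhibits it as a continuous function of `1/n` and `H_{n-1,2}`, and `H_{n-1,2} → ζ(2) = π²/6`.
-/

open Filter Finset Topology Real

noncomputable def varWBar (n : ℕ) : ℝ :=
  ∑ i ∈ Icc 1 (n - 1), (2 * ((n : ℝ) - i) / (((n : ℝ) - 1) * i * ((i : ℝ) + 1))) ^ 2

lemma sum_Icc_one_pred_eq_sum_range {M : Type*} [AddCommMonoid M] {f : ℕ → M} (hf : f 0 = 0)
    (n : ℕ) : ∑ k ∈ Icc 1 (n - 1), f k = ∑ k ∈ range n, f k := by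
  rcases n with _ | m
  · simp
  · rw [range_eq_Ico, sum_eq_sum_Ico_succ_bot (Nat.succ_pos m), hf, zero_add]
    rfl

lemma tendsto_sum_Icc_one_div_sq :
    Tendsto (fun n : ℕ => ∑ k ∈ Icc 1 (n - 1), 1 / (k : ℝ) ^ 2) atTop (𝓝 (π ^ 2 / 6)) := by
  simp_rw [sum_Icc_one_pred_eq_sum_range (f := fun k : ℕ => 1 / (k : ℝ) ^ 2) (by simp)]
  exact hasSum_zeta_two.tendsto_sum_nat

lemma sum_Icc_sub_sq_div_sq_mul_succ_sq (x : ℝ) (N : ℕ) :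
    ∑ i ∈ Icc 1 N, (x - i) ^ 2 / ((i : ℝ) ^ 2 * ((i : ℝ) + 1) ^ 2) =
      x ^ 2 * (2 * ∑ k ∈ Icc 1 N, 1 / (k : ℝ) ^ 2 - 3 + 2 / ((N : ℝ) + 1) + 1 / ((N : ℝ) + 1) ^ 2)
      - 2 * x * (2 - 1 / ((N : ℝ) + 1) - ∑ k ∈ Icc 1 N, 1 / (k : ℝ) ^ 2 - 1 / ((N : ℝ) + 1) ^ 2)
      + (∑ k ∈ Icc 1 N, 1 / (k : ℝ) ^ 2 + 1 / ((N : ℝ) + 1) ^ 2 - 1) := by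
  induction N with
  | zero => norm_num
  | succ N ih =>
    rw [sum_Icc_succ_top (by omega), sum_Icc_succ_top (by omega), ih]
    push_cast
    field_simp
    ring

lemma varWBar_eq (n : ℕ) (hn : 2 ≤ n) :
    varWBar n =
      4 * ((2 * (n : ℝ) ^ 4 + 2 * (n : ℝ) ^ 3 + (n : ℝ) ^ 2) *
          (∑ k ∈ Icc 1 (n - 1), 1 / (k : ℝ) ^ 2) -
        3 * (n : ℝ) ^ 4 - 2 * (n : ℝ) ^ 3 + 2 * (n : ℝ) ^ 2 + 2 * (n : ℝ) + 1) /
        ((n : ℝ) ^ 2 * ((n : ℝ) - 1) ^ 2) := by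
  have hn1 : (n : ℝ) - 1 ≠ 0 := by
    have : (2 : ℝ) ≤ n := by exact_mod_cast hn
    linarith
  have hpred : ((n - 1 : ℕ) : ℝ) + 1 = n := by
    rw [Nat.cast_sub (by omega)]
    ring
  have factor_out : varWBar n = 4 / ((n : ℝ) - 1) ^ 2 *
      ∑ i ∈ Icc 1 (n - 1), ((n : ℝ) - i) ^ 2 / ((i : ℝ) ^ 2 * ((i : ℝ) + 1) ^ 2) := by
    rw [varWBar, mul_sum]
    refine sum_congr rfl fun i hi => ?_
    have : (i : ℝ) ≠ 0 := by have := (mem_Icc.mp hi).1; positivity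
    field_simp
    ring
  rw [factor_out, sum_Icc_sub_sq_div_sq_mul_succ_sq, hpred]
  field_simp
  ring

lemma tendsto_varWBar : Tendsto varWBar atTop (𝓝 (4 * π ^ 2 / 3 - 12)) := by
  let F : ℝ × ℝ → ℝ := fun p =>
    4 * ((2 + 2 * p.1 + p.1 ^ 2) * p.2 - 3 - 2 * p.1 + 2 * p.1 ^ 2 + 2 * p.1 ^ 3 + p.1 ^ 4) /
      (1 - p.1) ^ 2
  have hF : ContinuousAt F (0, π ^ 2 / 6) := ContinuousAt.div (by fun_prop) (by fun_prop) (by simp)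
  have hlim : Tendsto (fun n : ℕ => F (1 / (n : ℝ), ∑ k ∈ Icc 1 (n - 1), 1 / (k : ℝ) ^ 2))
      atTop (𝓝 (F (0, π ^ 2 / 6))) :=
    hF.tendsto.comp (tendsto_one_div_atTop_nhds_zero_nat.prodMk_nhds tendsto_sum_Icc_one_div_sq)
  have hF0 : F (0, π ^ 2 / 6) = 4 * π ^ 2 / 3 - 12 := by simp only [F]; ring
  rw [hF0] at hlim
  refine hlim.congr' ?_
  filter_upwards [eventually_ge_atTop 2] with n hn
  have hn1 : (n : ℝ) - 1 ≠ 0 := by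
    have : (2 : ℝ) ≤ n := by exact_mod_cast hn
    linarith
  have : (n : ℝ) ≠ 0 := by positivity
  rw [varWBar_eq n hn]
  simp only [F]
  field_simp

theorem stmt9 :
    (∀ n : ℕ, 2 ≤ n →
      ∑ i ∈ Finset.Icc 1 (n - 1),
          (2 * ((n : ℝ) - i) / (((n : ℝ) - 1) * i * ((i : ℝ) + 1))) ^ 2 =
        4 * ((2 * (n : ℝ) ^ 4 + 2 * (n : ℝ) ^ 3 + (n : ℝ) ^ 2) *
            (∑ k ∈ Finset.Icc 1 (n - 1), 1 / (k : ℝ) ^ 2) -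
          3 * (n : ℝ) ^ 4 - 2 * (n : ℝ) ^ 3 + 2 * (n : ℝ) ^ 2 + 2 * (n : ℝ) + 1) /
          ((n : ℝ) ^ 2 * ((n : ℝ) - 1) ^ 2)) ∧
    Tendsto (fun n : ℕ =>
        ∑ i ∈ Finset.Icc 1 (n - 1),
          (2 * ((n : ℝ) - i) / (((n : ℝ) - 1) * i * ((i : ℝ) + 1))) ^ 2)
      atTop (nhds (4 * Real.pi ^ 2 / 3 - 12)) :=
  ⟨varWBar_eq, tendsto_varWBar⟩
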